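/- Let (ξ₁, ξ₂) ~ N((πβ, π)', Σ) with Σ positive definite and π > 0, and let β̂_U = τ̂(ξ₂)·(ξ₁ − (σ₁₂/σ₂²)ξ₂) + σ₁₂/σ₂² where τ̂(ξ₂) = (1/σ₂)(1 − Φ(ξ₂/σ₂))/φ(ξ₂/σ₂). Then for every ε > 0, E[|β̂_U|^{1+ε}] = +∞. -/

import Mathlib

open MeasureTheory ProbabilityTheory Filter

/-- Standard normal density `φ`. -/
noncomputable def stdPDF (x : ℝ) : ℝ :=
  (Real.sqrt (2 * Real.pi))⁻¹ * Real.exp (-(x ^ 2) / 2)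

/-- Standard normal CDF `Φ`. -/
noncomputable def stdCDF (x : ℝ) : ℝ := ∫ t in Set.Iic x, stdPDF t

/-- Mills-ratio estimator `τ̂(x, σ²) = (1/σ)(1 − Φ(x/σ))/φ(x/σ)`. -/
noncomputable def millsTau (σ x : ℝ) : ℝ :=
  (1 / σ) * (1 - stdCDF (x / σ)) / stdPDF (x / σ)

/-! On `{ξ₂ ≤ 0}` we have `1 - Φ(ξ₂/σ₂) ≥ 1/2`, so `τ̂(ξ₂) ≥ (2σ₂ φ(ξ₂/σ₂))⁻¹`, which grows
like `exp(ξ₂² / (2σ₂²))`. Writing `ξ₂ = π + σ₂ Z₂`, the `(1+ε)`-th power of this bound times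
the density of `Z₂` is `exp((ε/2) Z₂² + O(|Z₂|))`, which is not integrable at `-∞`.
The factor `ξ₁ - (σ₁₂/σ₂²) ξ₂ = c + s Z₁` with `s > 0` is independent of `ξ₂` and exceeds
`|σ₁₂/σ₂²| + 1` with positive probability; on that event `|β̂_U| ≥ τ̂(ξ₂)` wherever
`τ̂(ξ₂) ≥ 1`, so independence turns the divergence in `Z₂` into divergence of `E|β̂_U|^{1+ε}`. -/

lemma lintegral_eq_top_of_eventually_one_le_atBot {f : ℝ → ENNReal}
    (h : ∀ᶠ y in atBot, 1 ≤ f y) : ∫⁻ y, f y = ⊤ := by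
  obtain ⟨y₀, hy₀⟩ := eventually_atBot.1 h
  refine top_unique ?_
  calc ⊤ = ∫⁻ y, (Set.Iic y₀).indicator 1 y := by
        rw [lintegral_indicator_one measurableSet_Iic, Real.volume_Iic]
    _ ≤ ∫⁻ y, f y := lintegral_mono (Set.indicator_le fun y hy => hy₀ y hy)

lemma lintegral_gaussianReal_eq_top {μ : ℝ} {v : NNReal} (hv : v ≠ 0) {f : ℝ → ENNReal}
    (hf : Measurable f) (h : ∀ᶠ y in atBot, 1 ≤ gaussianPDF μ v y * f y) :
    ∫⁻ y, f y ∂gaussianReal μ v = ⊤ := by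
  rw [gaussianReal_of_var_ne_zero _ hv,
    lintegral_withDensity_eq_lintegral_mul _ (measurable_gaussianPDF _ _) hf]
  exact lintegral_eq_top_of_eventually_one_le_atBot h

lemma lintegral_eq_top_of_indepFun {Ω α β : Type*} [MeasurableSpace Ω] [MeasurableSpace α]
    [MeasurableSpace β] {P : Measure Ω} {X : Ω → α} {Y : Ω → β} (hX : Measurable X)
    (hY : Measurable Y) (hXY : IndepFun X Y P) {A : Set α} (hA : MeasurableSet A)
    (hPA : P.map X A ≠ 0) {f : β → ENNReal} (hf : Measurable f) (hf_top : ∫⁻ y, f y ∂P.map Y = ⊤)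
    {F : Ω → ENNReal} (hF : ∀ ω, X ω ∈ A → f (Y ω) ≤ F ω) : ∫⁻ ω, F ω ∂P = ⊤ := by
  have hA₁ : Measurable (A.indicator (1 : α → ENNReal)) := measurable_const.indicator hA
  refine top_unique ?_
  calc ⊤ = (∫⁻ x, A.indicator 1 x ∂P.map X) * ∫⁻ y, f y ∂P.map Y := by
        rw [hf_top, lintegral_indicator_one hA, ENNReal.mul_top hPA]
    _ = ∫⁻ ω, A.indicator 1 (X ω) * f (Y ω) ∂P := by
        rw [lintegral_map hA₁ hX, lintegral_map hf hY]
        exact (lintegral_mul_eq_lintegral_mul_lintegral_of_indepFun'' (hA₁.comp hX).aemeasurable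
          (hf.comp hY).aemeasurable (hXY.comp hA₁ hf)).symm
    _ ≤ ∫⁻ ω, F ω ∂P := lintegral_mono fun ω => by
        by_cases hω : X ω ∈ A
        · simpa [hω] using hF ω hω
        · simp [hω]

lemma le_abs_mul_add {t w d : ℝ} (ht : 1 ≤ t) (hw : |d| + 1 ≤ w) : t ≤ |t * w + d| := by
  have : t * (|d| + 1) ≤ t * w := mul_le_mul_of_nonneg_left hw (by linarith)
  have : |d| ≤ t * |d| := le_mul_of_one_le_left (abs_nonneg d) ht
  exact le_abs.2 (Or.inl (by linarith [neg_abs_le d]))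

section MillsRatio

open Real Set

lemma stdPDF_eq_gaussianPDFReal : stdPDF = gaussianPDFReal 0 1 := by
  ext x
  simp [stdPDF, gaussianPDFReal]

lemma stdPDF_nonneg (x : ℝ) : 0 ≤ stdPDF x := by
  rw [stdPDF_eq_gaussianPDFReal]
  exact gaussianPDFReal_nonneg 0 1 x

lemma integrable_stdPDF : Integrable stdPDF :=
  stdPDF_eq_gaussianPDFReal ▸ integrable_gaussianPDFReal 0 1

lemma one_sub_stdCDF (x : ℝ) : 1 - stdCDF x = ∫ t in Ioi x, stdPDF t := by
  rw [← integral_gaussianPDFReal_eq_one 0 one_ne_zero, ← stdPDF_eq_gaussianPDFReal, stdCDF,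
    ← intervalIntegral.integral_Iic_add_Ioi integrable_stdPDF.integrableOn
      integrable_stdPDF.integrableOn]
  ring

lemma setIntegral_Ioi_zero_stdPDF : ∫ t in Ioi 0, stdPDF t = 1 / 2 := by
  have h2π : π / (1 / 2) = 2 * π := by ring
  have hφ : ∀ t, stdPDF t = (√(2 * π))⁻¹ * exp (-(1 / 2) * t ^ 2) := fun t => by
    rw [stdPDF]; ring_nf
  simp_rw [hφ]
  rw [integral_const_mul, integral_gaussian_Ioi, h2π]
  field_simp

lemma half_le_one_sub_stdCDF {x : ℝ} (hx : x ≤ 0) : 1 / 2 ≤ 1 - stdCDF x := by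
  rw [one_sub_stdCDF, ← setIntegral_Ioi_zero_stdPDF]
  exact setIntegral_mono_set integrable_stdPDF.integrableOn (ae_of_all _ stdPDF_nonneg)
    (Ioi_subset_Ioi hx).eventuallyLE

lemma millsTau_eq (σ x : ℝ) :
    millsTau σ x = √(2 * π) / σ * exp ((x / σ) ^ 2 / 2) * (1 - stdCDF (x / σ)) := by
  rw [millsTau, stdPDF, neg_div, exp_neg]
  field_simp

lemma le_millsTau {σ x : ℝ} (hσ : 0 < σ) (hx : x ≤ 0) :
    √(2 * π) / (2 * σ) * exp ((x / σ) ^ 2 / 2) ≤ millsTau σ x := by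
  have := half_le_one_sub_stdCDF (div_nonpos_of_nonpos_of_nonneg hx hσ.le)
  rw [millsTau_eq]
  calc √(2 * π) / (2 * σ) * exp ((x / σ) ^ 2 / 2)
      = √(2 * π) / σ * exp ((x / σ) ^ 2 / 2) * (1 / 2) := by ring
    _ ≤ _ := by gcongr

lemma le_millsTau_add_mul {σ a y : ℝ} (hσ : 0 < σ) (hy : y + a / σ ≤ 0) :
    √(2 * π) / (2 * σ) * exp ((y + a / σ) ^ 2 / 2) ≤ millsTau σ (a + σ * y) := by
  have harg : (a + σ * y) / σ = y + a / σ := by field_simp; ring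
  have hx : a + σ * y ≤ 0 := by
    have := mul_nonpos_of_nonneg_of_nonpos hσ.le hy
    rwa [mul_add, mul_div_cancel₀ _ hσ.ne', add_comm] at this
  simpa only [harg] using le_millsTau hσ hx

lemma monotone_stdCDF : Monotone stdCDF := fun _ _ hxy =>
  setIntegral_mono_set integrable_stdPDF.integrableOn (ae_of_all _ stdPDF_nonneg)
    (Iic_subset_Iic.2 hxy).eventuallyLE

lemma measurable_millsTau (σ : ℝ) : Measurable (millsTau σ) := by
  have : Measurable stdPDF := by unfold stdPDF; fun_prop
  unfold millsTau
  exact (measurable_const.mul (measurable_const.sub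
    (monotone_stdCDF.measurable.comp (measurable_id.div_const σ)))).div
    (this.comp (measurable_id.div_const σ))

lemma tendsto_add_const_sq_atBot (a : ℝ) : Tendsto (fun y : ℝ => (y + a) ^ 2) atBot atTop := by
  have h := tendsto_atBot_add_const_right atBot a tendsto_id
  simpa only [sq, id] using h.atBot_mul_atBot₀ h

lemma tendsto_one_add_mul_sq_sub_sq_atBot {ε : ℝ} (hε : 0 < ε) (m : ℝ) :
    Tendsto (fun y => (1 + ε) * (y + m) ^ 2 - y ^ 2) atBot atTop := by
  have hsq : ∀ y, (1 + ε) * (y + m) ^ 2 - y ^ 2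
      = ε * (y + (1 + ε) * m / ε) ^ 2 - (1 + ε) * m ^ 2 / ε :=
    fun y => by field_simp; ring
  simp_rw [hsq]
  exact tendsto_atTop_add_const_right _ _ ((tendsto_add_const_sq_atBot _).const_mul_atTop hε)

lemma tendsto_rpow_mul_stdPDF_atBot {K ε : ℝ} (hK : 0 < K) (hε : 0 < ε) (m : ℝ) :
    Tendsto (fun y => (K * exp ((y + m) ^ 2 / 2)) ^ (1 + ε) * stdPDF y) atBot atTop := by
  have h : ∀ y, (K * exp ((y + m) ^ 2 / 2)) ^ (1 + ε) * stdPDF y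
      = K ^ (1 + ε) * (√(2 * π))⁻¹ * exp (((1 + ε) * (y + m) ^ 2 - y ^ 2) / 2) := fun y => by
    rw [mul_rpow hK.le (exp_nonneg _), ← exp_mul, stdPDF, mul_mul_mul_comm, ← exp_add]
    ring_nf
  simp_rw [h]
  exact Tendsto.const_mul_atTop (by positivity) (tendsto_exp_atTop.comp
    ((tendsto_one_add_mul_sq_sub_sq_atBot hε m).atTop_div_const two_pos))

lemma lintegral_millsTau_rpow_eq_top {σ : ℝ} (hσ : 0 < σ) (a : ℝ) {ε : ℝ} (hε : 0 < ε) :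
    ∫⁻ y, {y | 1 ≤ millsTau σ (a + σ * y)}.indicator
      (fun y => ENNReal.ofReal (millsTau σ (a + σ * y) ^ (1 + ε))) y ∂gaussianReal 0 1 = ⊤ := by
  have hτ : Measurable fun y => millsTau σ (a + σ * y) :=
    (measurable_millsTau σ).comp (by fun_prop)
  set K := √(2 * π) / (2 * σ)
  have hK : 0 < K := by positivity
  refine lintegral_gaussianReal_eq_top one_ne_zero
    (Measurable.indicator (by fun_prop) (measurableSet_le measurable_const hτ)) ?_
  filter_upwards [eventually_le_atBot (-(a / σ)),
    (tendsto_exp_atTop.comp ((tendsto_add_const_sq_atBot _).atTop_div_const two_pos)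
      |>.const_mul_atTop hK).eventually_ge_atTop 1,
    (tendsto_rpow_mul_stdPDF_atBot hK hε (a / σ)).eventually_ge_atTop 1] with y hy hL hLφ
  have hLτ := le_millsTau_add_mul hσ (le_neg_iff_add_nonpos_right.1 hy)
  rw [indicator_of_mem (s := {y | 1 ≤ millsTau σ (a + σ * y)}) (hL.trans hLτ), gaussianPDF,
    ← stdPDF_eq_gaussianPDFReal, ← ENNReal.ofReal_mul (stdPDF_nonneg y), ← ENNReal.ofReal_one]
  refine ENNReal.ofReal_le_ofReal (hLφ.trans ?_)
  rw [mul_comm (stdPDF y)]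
  gcongr
  exact stdPDF_nonneg y

end MillsRatio

theorem stmt4_general {Ω : Type*} [MeasurableSpace Ω] (P : Measure Ω)
    (Z₁ Z₂ : Ω → ℝ) (hm₁ : Measurable Z₁) (hm₂ : Measurable Z₂)
    (hind : IndepFun Z₁ Z₂ P)
    (hZ₁ : P.map Z₁ = gaussianReal 0 1) (hZ₂ : P.map Z₂ = gaussianReal 0 1)
    (β π σ₁ σ₁₂ σ₂ : ℝ) (hσ₂ : 0 < σ₂)
    (hpd : σ₁₂ ^ 2 < σ₁ ^ 2 * σ₂ ^ 2)
    (ξ₁ ξ₂ : Ω → ℝ)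
    (hξ₂ : ξ₂ = fun ω => π + σ₂ * Z₂ ω)
    (hξ₁ : ξ₁ = fun ω => π * β + (σ₁₂ / σ₂) * Z₂ ω
        + Real.sqrt (σ₁ ^ 2 - σ₁₂ ^ 2 / σ₂ ^ 2) * Z₁ ω)
    (ε : ℝ) (hε : 0 < ε) :
    ∫⁻ ω, ENNReal.ofReal
        (|millsTau σ₂ (ξ₂ ω) * (ξ₁ ω - (σ₁₂ / σ₂ ^ 2) * ξ₂ ω) + σ₁₂ / σ₂ ^ 2| ^ (1 + ε))
        ∂P = ⊤ := by
  set d := σ₁₂ / σ₂ ^ 2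
  set s := Real.sqrt (σ₁ ^ 2 - σ₁₂ ^ 2 / σ₂ ^ 2)
  set c := π * β - d * π
  have hs : 0 < s := Real.sqrt_pos.2 (by rw [sub_pos, div_lt_iff₀ (by positivity)]; linarith)
  have hresid : ∀ ω, ξ₁ ω - d * ξ₂ ω = c + s * Z₁ ω := fun ω => by
    simp only [hξ₁, hξ₂, d, c]; field_simp; ring
  have hτ : Measurable fun y => millsTau σ₂ (π + σ₂ * y) :=
    (measurable_millsTau σ₂).comp (by fun_prop)
  refine lintegral_eq_top_of_indepFun hm₁ hm₂ hind (measurableSet_Ici (a := (|d| + 1 - c) / s))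
    ?_ ((by fun_prop : Measurable _).indicator (measurableSet_le measurable_const hτ))
    (hZ₂ ▸ lintegral_millsTau_rpow_eq_top hσ₂ π hε) fun ω hω => ?_
  · rw [hZ₁]
    exact fun h => by simpa using gaussianReal_absolutelyContinuous' 0 one_ne_zero h
  · refine Set.indicator_apply_le' (fun hτ₁ => ?_) fun _ => bot_le
    have hw : |d| + 1 ≤ c + s * Z₁ ω := by
      have := (div_le_iff₀ hs).1 hω
      linarith
    rw [hresid, hξ₂]
    gcongr
    · exact zero_le_one.trans hτ₁
    · exact le_abs_mul_add hτ₁ hw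

/-- β̂_U has infinite 1+ε absolute moment for every ε > 0. -/
theorem stmt4 {Ω : Type*} [MeasurableSpace Ω] (P : Measure Ω) [IsProbabilityMeasure P]
    (Z₁ Z₂ : Ω → ℝ) (hm₁ : Measurable Z₁) (hm₂ : Measurable Z₂)
    (hind : IndepFun Z₁ Z₂ P)
    (hZ₁ : P.map Z₁ = gaussianReal 0 1) (hZ₂ : P.map Z₂ = gaussianReal 0 1)
    (β π σ₁ σ₁₂ σ₂ : ℝ) (hπ : 0 < π) (hσ₂ : 0 < σ₂)
    (hpd : σ₁₂ ^ 2 < σ₁ ^ 2 * σ₂ ^ 2)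
    (ξ₁ ξ₂ : Ω → ℝ)
    (hξ₂ : ξ₂ = fun ω => π + σ₂ * Z₂ ω)
    (hξ₁ : ξ₁ = fun ω => π * β + (σ₁₂ / σ₂) * Z₂ ω
        + Real.sqrt (σ₁ ^ 2 - σ₁₂ ^ 2 / σ₂ ^ 2) * Z₁ ω)
    (ε : ℝ) (hε : 0 < ε) :
    ∫⁻ ω, ENNReal.ofReal
        (|millsTau σ₂ (ξ₂ ω) * (ξ₁ ω - (σ₁₂ / σ₂ ^ 2) * ξ₂ ω) + σ₁₂ / σ₂ ^ 2| ^ (1 + ε))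
        ∂P = ⊤ :=
  stmt4_general P Z₁ Z₂ hm₁ hm₂ hind hZ₁ hZ₂ β π σ₁ σ₁₂ σ₂ hσ₂ hpd ξ₁ ξ₂ hξ₂ hξ₁ ε hε
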